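/- Let n ≥ 1 and let k : {I : ∅ ≠ I ⊆ [n]} → ℝ be a table of putative cumulants (extended by k_∅ = 0). For J ⊆ [n] define the transformed table k^{(J)} by k^{(J)}_B = (−1)^{|J ∩ B|} k_B for |B| ≥ 2 and k^{(J)}_{{i}} = 1 − k_{{i}} if i ∈ J, k^{(J)}_{{i}} = k_{{i}} otherwise. Then k lies in the space of cumulants 𝒦_n — i.e. k is the cumulant table of some probability distribution p : 2^[n] → ℝ with p_I ≥ 0 and ∑_I p_I = 1 — if and only if for every J ⊆ [n] the inequality ∑_{π ∈ Π([n])} ∏_{B ∈ π} k^{(J)}_B ≥ 0 holds. In particular 𝒦_n is a basic semialgebraic subset of ℝ^{2ⁿ−1} defined by these 2ⁿ polynomial inequalities. -/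

import Mathlib

open Finset

/-- The cumulants of a real table `μ` indexed by subsets of `[n]`. -/
noncomputable def cumulant {n : ℕ} (μ : Finset (Fin n) → ℝ) (I : Finset (Fin n)) : ℝ :=
  ∑ π : Finpartition I,
    (-1 : ℝ) ^ (π.parts.card - 1) * (Nat.factorial (π.parts.card - 1) : ℝ) *
      ∏ B ∈ π.parts, μ B

/-- The moments `μ_I = ∑_{L ⊇ I} p_L` of a real table `p`. -/
noncomputable def moment {n : ℕ} (p : Finset (Fin n) → ℝ) (I : Finset (Fin n)) : ℝ :=
  ∑ L ∈ univ.filter (fun L => I ⊆ L), p L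

/-- The transformed table `k^{(J)}`: `k^{(J)}_B = (−1)^{|J∩B|} k_B` for `|B| ≥ 2`,
and `k^{(J)}_{i} = 1 − k_{i}` if `i ∈ J`, `k^{(J)}_{i} = k_{i}` otherwise. -/
noncomputable def rhoTable {n : ℕ} (J : Finset (Fin n)) (k : Finset (Fin n) → ℝ) :
    Finset (Fin n) → ℝ :=
  fun B =>
    if B.card = 1 then (if B ⊆ J then 1 - k B else k B)
    else (-1 : ℝ) ^ (J ∩ B).card * k B

/-! Write `M(k)_I = ∑_{π ∈ Π(I)} ∏_{B ∈ π} k_B`. Moment–cumulant inversion on the partition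
lattice says that `k` is the cumulant table of `p` exactly when `M(k)` is the moment table of `p`.
Flipping the state of a coordinate `j` acts on moment tables by `μ_I ↦ μ_{I \ j} - μ_I` for
`j ∈ I`, and on `M(k)` exactly as `k ↦ k^{({j})}` does: the part containing `j` changes sign,
except the singleton `{j}`, which becomes `1 - k_{j}`. Hence `M(k^{(J)})_{[n]}` is the top moment
of `p` flipped along `J`, i.e. `p_{[n] \ J}`. So the `2ⁿ` polynomials are the probabilities of the
unique `p` whose moment table is `M(k)` (Möbius inversion), whose total mass is `M(k)_∅ = 1`. -/

namespace Finpartition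

variable {α : Type*} [DecidableEq α] {s t : Finset α}

lemma parts_avoid_of_mem (P : Finpartition s) (ht : t ∈ P.parts) :
    (P.avoid t).parts = P.parts.erase t := by
  ext u
  rw [mem_avoid, mem_erase]
  constructor
  · rintro ⟨v, hv, hvt, rfl⟩
    have hne : v ≠ t := by rintro rfl; exact hvt le_rfl
    have hdisj : Disjoint v t := P.disjoint hv ht hne
    rw [hdisj.sdiff_eq_left]
    exact ⟨hne, hv⟩
  · rintro ⟨hne, hu⟩
    have hdisj : Disjoint u t := P.disjoint hu ht hne
    exact ⟨u, hu, fun hle => P.ne_bot hu (hdisj.eq_bot_of_le hle), hdisj.sdiff_eq_left⟩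

lemma parts_extendOfLE_sdiff (P : Finpartition (s \ t)) (ht : t.Nonempty) (hts : t ⊆ s) :
    (P.extendOfLE sdiff_le).parts = insert t P.parts := by
  rw [parts_extendOfLE_of_lt _ (sdiff_ssubset hts ht), Finset.sdiff_sdiff_eq_self hts]

lemma notMem_parts_of_sdiff (P : Finpartition (s \ t)) (ht : t.Nonempty) : t ∉ P.parts := by
  intro h
  obtain ⟨x, hx⟩ := ht
  exact (mem_sdiff.1 (P.le h hx)).2 hx

lemma extendOfLE_avoid (P : Finpartition s) (ht : t ∈ P.parts) :
    (P.avoid t).extendOfLE sdiff_le = P := by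
  ext : 1
  rw [parts_extendOfLE_sdiff _ (P.nonempty_of_mem_parts ht) (P.le ht), parts_avoid_of_mem P ht,
    insert_erase ht]

lemma avoid_extendOfLE (P : Finpartition (s \ t)) (ht : t.Nonempty) (hts : t ⊆ s) :
    (P.extendOfLE sdiff_le).avoid t = P := by
  have hmem : t ∈ (P.extendOfLE sdiff_le).parts := by
    rw [parts_extendOfLE_sdiff P ht hts]; exact mem_insert_self _ _
  ext : 1
  rw [parts_avoid_of_mem _ hmem, parts_extendOfLE_sdiff P ht hts,
    erase_insert (P.notMem_parts_of_sdiff ht)]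

/-- A partition of `s` with a marked part `t` is the same as the part `t` together with a
partition of `s \ t`. -/
lemma sum_sum_parts {R : Type*} [AddCommMonoid R] (s : Finset α)
    (f : Finset α → Finpartition s → R) :
    ∑ P : Finpartition s, ∑ t ∈ P.parts, f t P =
      ∑ t ∈ s.powerset.filter (·.Nonempty),
        ∑ Q : Finpartition (s \ t), f t (Q.extendOfLE sdiff_le) := by
  rw [sum_sigma', sum_sigma']
  refine sum_nbij' (fun x => ⟨x.2, x.1.avoid x.2⟩) (fun y => ⟨y.2.extendOfLE sdiff_le, y.1⟩)
    ?_ ?_ ?_ ?_ ?_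
  · rintro ⟨P, t⟩ h
    simp only [mem_sigma, mem_univ, true_and] at h
    simpa using ⟨P.le h, P.nonempty_of_mem_parts h⟩
  · rintro ⟨t, Q⟩ h
    simp only [mem_sigma, mem_filter, mem_powerset, mem_univ, and_true] at h
    simp [parts_extendOfLE_sdiff Q h.2 h.1]
  · rintro ⟨P, t⟩ h
    simp only [mem_sigma, mem_univ, true_and] at h
    exact Sigma.ext (extendOfLE_avoid P h) HEq.rfl
  · rintro ⟨t, Q⟩ h
    simp only [mem_sigma, mem_filter, mem_powerset, mem_univ, and_true] at h
    exact Sigma.ext rfl (heq_of_eq (avoid_extendOfLE Q h.2 h.1))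
  · rintro ⟨P, t⟩ h
    simp only [mem_sigma, mem_univ, true_and] at h
    simp only [extendOfLE_avoid P h]

lemma parts_filter_mem {x : α} (hx : x ∈ s) (P : Finpartition s) :
    P.parts.filter (x ∈ ·) = {P.part x} := by
  ext t
  rw [mem_filter, mem_singleton]
  constructor
  · rintro ⟨ht, hxt⟩
    exact (P.part_eq_of_mem ht hxt).symm
  · rintro rfl
    exact ⟨P.part_mem.2 hx, P.mem_part hx⟩

lemma card_parts_filter_notMem {x : α} (hx : x ∈ s) (P : Finpartition s) :
    #(P.parts.filter (x ∉ ·)) = #P.parts - 1 := by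
  have h := card_filter_add_card_filter_not (s := P.parts) (p := (x ∈ ·))
  rw [P.parts_filter_mem hx, card_singleton] at h
  omega

lemma filter_card_parts_eq_one (hs : s.Nonempty) :
    univ.filter (fun P : Finpartition s => #P.parts = 1) = {indiscrete hs.ne_empty} := by
  ext P
  simp only [mem_filter, mem_univ, true_and, mem_singleton]
  constructor
  · intro h
    obtain ⟨t, ht⟩ := card_eq_one.1 h
    have hts : t = s := by simpa [ht] using P.sup_parts
    ext : 1
    rw [ht, hts]
    rfl
  · rintro rfl
    rfl

end Finpartition

namespace Finset

variable {α : Type*} [DecidableEq α]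

lemma sum_ssubsets_filter_mem_sdiff {M : Type*} [AddCommMonoid M]
    (f : Finset α → Finset α → M) {s : Finset α} {x : α} (hx : x ∈ s) :
    ∑ t ∈ s.ssubsets.filter (x ∈ ·), f t (s \ t) =
      ∑ u ∈ s.powerset.filter (fun u => u.Nonempty ∧ x ∉ u), f (s \ u) u := by
  refine sum_nbij' (s \ ·) (s \ ·) ?_ ?_ ?_ ?_ ?_
  · intro t ht
    simp only [mem_filter, mem_ssubsets, mem_powerset] at ht ⊢
    refine ⟨sdiff_subset, ?_, fun h => (mem_sdiff.1 h).2 ht.2⟩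
    obtain ⟨y, hys, hyt⟩ := exists_of_ssubset ht.1
    exact ⟨y, mem_sdiff.2 ⟨hys, hyt⟩⟩
  · intro u hu
    simp only [mem_filter, mem_ssubsets, mem_powerset] at hu ⊢
    exact ⟨sdiff_ssubset hu.1 hu.2.1, mem_sdiff.2 ⟨hx, hu.2.2⟩⟩
  · intro t ht
    simp only [mem_filter, mem_ssubsets] at ht
    exact Finset.sdiff_sdiff_eq_self ht.1.subset
  · intro u hu
    simp only [mem_filter, mem_powerset] at hu
    exact Finset.sdiff_sdiff_eq_self hu.1
  · intro t ht
    simp only [mem_filter, mem_ssubsets] at ht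
    rw [Finset.sdiff_sdiff_eq_self ht.1.subset]

lemma subset_symmDiff_singleton_of_notMem {s M : Finset α} {j : α} (hj : j ∉ s) :
    s ⊆ symmDiff M {j} ↔ s ⊆ M := by
  simp only [subset_iff, mem_symmDiff, mem_singleton]
  grind

lemma subset_symmDiff_singleton_of_mem {s M : Finset α} {j : α} (hj : j ∈ s) :
    s ⊆ symmDiff M {j} ↔ s.erase j ⊆ M ∧ j ∉ M := by
  simp only [subset_iff, mem_symmDiff, mem_singleton, mem_erase]
  grind

end Finset

lemma neg_one_pow_mul_factorial_add_mul {R : Type*} [CommRing R] (m : ℕ) :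
    (-1 : R) ^ m * m.factorial + m * ((-1) ^ (m - 1) * (m - 1).factorial) =
      if m = 0 then 1 else 0 := by
  cases m with
  | zero => simp
  | succ m =>
    rw [if_neg m.succ_ne_zero, Nat.add_sub_cancel, Nat.factorial_succ]
    push_cast
    ring

section MomentOfCumulant

variable {α R : Type*} [DecidableEq α] [CommRing R]

def momentOfCumulant (k : Finset α → R) (s : Finset α) : R :=
  ∑ P : Finpartition s, ∏ t ∈ P.parts, k t

@[simp]
lemma momentOfCumulant_empty (k : Finset α → R) : momentOfCumulant k ∅ = 1 := by
  rw [momentOfCumulant, ← bot_eq_empty, Fintype.sum_unique, Finpartition.parts_eq_empty_iff.2 rfl,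
    prod_empty]

lemma momentOfCumulant_congr {k k' : Finset α → R} {s : Finset α}
    (h : ∀ t ⊆ s, t.Nonempty → k t = k' t) : momentOfCumulant k s = momentOfCumulant k' s :=
  sum_congr rfl fun P _ => prod_congr rfl fun t ht => h t (P.le ht) (P.nonempty_of_mem_parts ht)

lemma momentOfCumulant_eq_sum_mem (k : Finset α → R) {s : Finset α} {x : α} (hx : x ∈ s) :
    momentOfCumulant k s = ∑ t ∈ s.powerset.filter (x ∈ ·), k t * momentOfCumulant k (s \ t) := by
  have hmark : ∀ P : Finpartition s,
      ∏ u ∈ P.parts, k u = ∑ t ∈ P.parts, if x ∈ t then ∏ u ∈ P.parts, k u else 0 := by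
    intro P
    rw [← sum_filter, P.parts_filter_mem hx, sum_singleton]
  rw [momentOfCumulant, sum_congr rfl fun P _ => hmark P, Finpartition.sum_sum_parts, sum_filter,
    sum_filter]
  refine sum_congr rfl fun t ht => ?_
  rw [mem_powerset] at ht
  by_cases hxt : x ∈ t
  · rw [if_pos ⟨x, hxt⟩, if_pos hxt, momentOfCumulant, mul_sum]
    refine sum_congr rfl fun Q _ => ?_
    rw [if_pos hxt, Q.parts_extendOfLE_sdiff ⟨x, hxt⟩ ht,
      prod_insert (Q.notMem_parts_of_sdiff ⟨x, hxt⟩)]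
  · simp [hxt]

lemma momentOfCumulant_eq_add_sum (k : Finset α → R) {s : Finset α} {x : α} (hx : x ∈ s) :
    momentOfCumulant k s =
      k s + ∑ t ∈ s.ssubsets.filter (x ∈ ·), k t * momentOfCumulant k (s \ t) := by
  rw [momentOfCumulant_eq_sum_mem k hx, ssubsets, filter_erase,
    ← add_sum_erase _ _ (mem_filter.2 ⟨mem_powerset_self s, hx⟩), Finset.sdiff_self,
    momentOfCumulant_empty, mul_one]

lemma eq_of_momentOfCumulant_eq {k k' : Finset α → R}
    (h : momentOfCumulant k = momentOfCumulant k') {s : Finset α} (hs : s.Nonempty) :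
    k s = k' s := by
  induction s using Finset.strongInduction with
  | H s ih =>
    obtain ⟨x, hx⟩ := hs
    have hrest : ∑ t ∈ s.ssubsets.filter (x ∈ ·), k t * momentOfCumulant k (s \ t) =
        ∑ t ∈ s.ssubsets.filter (x ∈ ·), k' t * momentOfCumulant k' (s \ t) :=
      sum_congr rfl fun t ht => by
        rw [mem_filter, mem_ssubsets] at ht
        rw [ih t ht.1 ⟨x, ht.2⟩, h]
    have hs := congrFun h s
    rwa [momentOfCumulant_eq_add_sum k hx, momentOfCumulant_eq_add_sum k' hx, hrest,
      add_left_inj] at hs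

end MomentOfCumulant

section Cumulant

variable {n : ℕ}

lemma sum_mul_cumulant_sdiff (μ : Finset (Fin n) → ℝ) {s : Finset (Fin n)} {x : Fin n}
    (hx : x ∈ s) :
    ∑ t ∈ s.powerset.filter (fun t => t.Nonempty ∧ x ∉ t), μ t * cumulant μ (s \ t) =
      ∑ P : Finpartition s, ((#P.parts - 1 : ℕ) : ℝ) *
        ((-1) ^ (#P.parts - 1 - 1) * ((#P.parts - 1 - 1).factorial : ℝ) * ∏ u ∈ P.parts, μ u) := by
  have hcount : ∀ P : Finpartition s, ∀ c : ℝ,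
      ((#P.parts - 1 : ℕ) : ℝ) * c = ∑ t ∈ P.parts, if x ∉ t then c else 0 := by
    intro P c
    rw [← sum_filter, sum_const, nsmul_eq_mul, P.card_parts_filter_notMem hx]
  rw [sum_congr rfl fun P _ => hcount P _, Finpartition.sum_sum_parts, sum_filter, sum_filter]
  refine sum_congr rfl fun t ht => ?_
  rw [mem_powerset] at ht
  by_cases ht' : t.Nonempty ∧ x ∉ t
  · rw [if_pos ht', if_pos ht'.1, cumulant, mul_sum]
    refine sum_congr rfl fun Q _ => ?_
    have hQ := Q.notMem_parts_of_sdiff ht'.1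
    rw [if_pos ht'.2, Q.parts_extendOfLE_sdiff ht'.1 ht, prod_insert hQ, card_insert_of_notMem hQ,
      Nat.add_sub_cancel]
    ring
  · rw [if_neg ht']
    by_cases hne : t.Nonempty
    · rw [if_pos hne]
      exact (sum_eq_zero fun Q _ => if_neg fun h => ht' ⟨hne, h⟩).symm
    · rw [if_neg hne]

/-- Marking a part that avoids `x` counts a partition with `m` parts `m - 1` times, and
`(-1)^m m! + m (-1)^(m-1) (m-1)!` vanishes unless `m = 0`. -/
lemma cumulant_eq_sub_sum (μ : Finset (Fin n) → ℝ) {s : Finset (Fin n)} {x : Fin n} (hx : x ∈ s) :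
    cumulant μ s =
      μ s - ∑ t ∈ s.powerset.filter (fun t => t.Nonempty ∧ x ∉ t), μ t * cumulant μ (s \ t) := by
  have hs : s.Nonempty := ⟨x, hx⟩
  have hcoef : ∀ P : Finpartition s,
      (-1 : ℝ) ^ (#P.parts - 1) * ((#P.parts - 1).factorial : ℝ) * ∏ u ∈ P.parts, μ u +
        ((#P.parts - 1 : ℕ) : ℝ) *
          ((-1) ^ (#P.parts - 1 - 1) * ((#P.parts - 1 - 1).factorial : ℝ) * ∏ u ∈ P.parts, μ u) =
        if #P.parts = 1 then ∏ u ∈ P.parts, μ u else 0 := by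
    intro P
    have hpos : 0 < #P.parts := card_pos.2 (P.parts_nonempty hs.ne_empty)
    have h := neg_one_pow_mul_factorial_add_mul (R := ℝ) (#P.parts - 1)
    split_ifs at h ⊢ <;> first | omega | linear_combination (∏ u ∈ P.parts, μ u) * h
  rw [sum_mul_cumulant_sdiff μ hx, eq_sub_iff_add_eq, cumulant, ← sum_add_distrib,
    sum_congr rfl fun P _ => hcoef P, ← sum_filter, Finpartition.filter_card_parts_eq_one hs,
    sum_singleton, Finpartition.indiscrete_parts, prod_singleton]

lemma momentOfCumulant_cumulant (μ : Finset (Fin n) → ℝ) {s : Finset (Fin n)} (hs : s.Nonempty) :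
    momentOfCumulant (cumulant μ) s = μ s := by
  induction s using Finset.strongInduction with
  | H s ih =>
    obtain ⟨x, hx⟩ := hs
    have hrest : ∑ t ∈ s.ssubsets.filter (x ∈ ·),
        cumulant μ t * momentOfCumulant (cumulant μ) (s \ t) =
        ∑ t ∈ s.ssubsets.filter (x ∈ ·), cumulant μ t * μ (s \ t) := by
      refine sum_congr rfl fun t ht => ?_
      rw [mem_filter, mem_ssubsets] at ht
      obtain ⟨y, hys, hyt⟩ := exists_of_ssubset ht.1
      rw [ih (s \ t) (sdiff_ssubset ht.1.subset ⟨x, ht.2⟩) ⟨y, mem_sdiff.2 ⟨hys, hyt⟩⟩]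
    rw [momentOfCumulant_eq_add_sum _ hx, hrest,
      sum_ssubsets_filter_mem_sdiff (fun t u => cumulant μ t * μ u) hx, cumulant_eq_sub_sum μ hx]
    simp only [mul_comm (cumulant μ _)]
    exact sub_add_cancel _ _

lemma cumulant_momentOfCumulant (k : Finset (Fin n) → ℝ) {s : Finset (Fin n)} (hs : s.Nonempty) :
    cumulant (momentOfCumulant k) s = k s := by
  refine eq_of_momentOfCumulant_eq (funext fun t => ?_) hs
  rcases t.eq_empty_or_nonempty with rfl | ht
  · simp
  · exact momentOfCumulant_cumulant _ ht

lemma momentOfCumulant_eq_iff {μ : Finset (Fin n) → ℝ} (hμ : μ ∅ = 1) {k : Finset (Fin n) → ℝ} :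
    momentOfCumulant k = μ ↔ ∀ s, s.Nonempty → k s = cumulant μ s := by
  constructor
  · rintro rfl s hs
    exact (cumulant_momentOfCumulant k hs).symm
  · intro h
    funext s
    rcases s.eq_empty_or_nonempty with rfl | hs
    · rw [momentOfCumulant_empty, hμ]
    · rw [momentOfCumulant_congr fun t _ ht => h t ht, momentOfCumulant_cumulant μ hs]

end Cumulant

section Moment

variable {n : ℕ}

lemma moment_eq_sum_ite (p : Finset (Fin n) → ℝ) (s : Finset (Fin n)) :
    moment p s = ∑ L, if s ⊆ L then p L else 0 := by
  rw [moment, sum_filter]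

lemma moment_empty (p : Finset (Fin n) → ℝ) : moment p ∅ = ∑ L, p L := by
  simp [moment]

lemma moment_univ (p : Finset (Fin n) → ℝ) : moment p univ = p univ := by
  simp [moment_eq_sum_ite, univ_subset_iff]

lemma moment_surjective :
    Function.Surjective (moment : (Finset (Fin n) → ℝ) → Finset (Fin n) → ℝ) := by
  let M : (Finset (Fin n) → ℝ) →ₗ[ℝ] Finset (Fin n) → ℝ :=
    { toFun := moment
      map_add' := fun p q => by ext s; simp [moment, sum_add_distrib]
      map_smul' := fun c p => by ext s; simp [moment, mul_sum] }
  refine (LinearMap.injective_iff_surjective (f := M)).1 ?_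
  rw [← LinearMap.ker_eq_bot, LinearMap.ker_eq_bot']
  intro p hp
  funext s
  have hsum : ∀ t, (0 : Finset (Fin n) → ℝ) t = ∑ L ∈ Ici t, p L := fun t => by
    rw [← congrFun hp t]
    simp only [M, LinearMap.coe_mk, AddHom.coe_mk, moment]
    congr 1
    ext L
    simp
  simp [IncidenceAlgebra.moebius_inversion_top p 0 hsum s]

lemma moment_comp_symmDiff_singleton (q : Finset (Fin n) → ℝ) (j : Fin n) :
    moment (fun L => q (symmDiff L {j})) =
      fun s => if j ∈ s then moment q (s.erase j) - moment q s else moment q s := by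
  funext s
  have hinv : Function.Involutive (fun L : Finset (Fin n) => symmDiff L {j}) :=
    fun L => symmDiff_symmDiff_cancel_right _ _
  rw [moment_eq_sum_ite, ← Equiv.sum_comp hinv.toPerm]
  simp only [Function.Involutive.coe_toPerm, symmDiff_symmDiff_cancel_right]
  split_ifs with hj
  · rw [moment_eq_sum_ite, moment_eq_sum_ite, ← sum_sub_distrib]
    refine sum_congr rfl fun M _ => ?_
    have hsM : s ⊆ M ↔ s.erase j ⊆ M ∧ j ∈ M := by
      conv_lhs => rw [← insert_erase hj, insert_subset_iff, and_comm]
    by_cases hjM : j ∈ M <;> by_cases hsjM : s.erase j ⊆ M <;>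
      simp [subset_symmDiff_singleton_of_mem hj, hsM, hjM, hsjM]
  · simp only [subset_symmDiff_singleton_of_notMem hj, moment_eq_sum_ite]

end Moment

section RhoTable

variable {n : ℕ}

lemma rhoTable_empty (k : Finset (Fin n) → ℝ) : rhoTable ∅ k = k := by
  funext t
  by_cases ht : #t = 1
  · obtain ⟨i, rfl⟩ := card_eq_one.1 ht
    simp [rhoTable]
  · simp [rhoTable, ht]

lemma rhoTable_singleton_of_notMem (k : Finset (Fin n) → ℝ) {j : Fin n} {t : Finset (Fin n)}
    (hj : j ∉ t) : rhoTable {j} k t = k t := by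
  by_cases ht : #t = 1
  · obtain ⟨i, rfl⟩ := card_eq_one.1 ht
    have hij : i ≠ j := fun h => hj (mem_singleton.2 h.symm)
    simp [rhoTable, hij]
  · simp [rhoTable, ht, singleton_inter_of_notMem hj]

lemma rhoTable_singleton_of_mem (k : Finset (Fin n) → ℝ) {j : Fin n} {t : Finset (Fin n)}
    (hj : j ∈ t) : rhoTable {j} k t = (if t = {j} then 1 else 0) - k t := by
  by_cases ht : #t = 1
  · obtain ⟨i, rfl⟩ := card_eq_one.1 ht
    simp_all [rhoTable]
  · have htj : t ≠ {j} := by rintro rfl; exact ht (card_singleton j)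
    simp [rhoTable, ht, htj, singleton_inter_of_mem hj]

lemma rhoTable_insert (k : Finset (Fin n) → ℝ) {j : Fin n} {J : Finset (Fin n)} (hj : j ∉ J) :
    rhoTable (insert j J) k = rhoTable {j} (rhoTable J k) := by
  funext t
  by_cases ht : #t = 1
  · obtain ⟨i, rfl⟩ := card_eq_one.1 ht
    by_cases hij : i = j
    · subst hij
      simp [rhoTable, hj]
    · simp [rhoTable, hij]
  · by_cases hjt : j ∈ t
    · simp [rhoTable, ht, insert_inter_of_mem hjt, singleton_inter_of_mem hjt,
        card_insert_of_notMem (fun h => hj (mem_inter.1 h).1), pow_succ]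
    · simp [rhoTable, ht, insert_inter_of_notMem hjt, singleton_inter_of_notMem hjt]

lemma momentOfCumulant_rhoTable_singleton (k : Finset (Fin n) → ℝ) (j : Fin n) :
    momentOfCumulant (rhoTable {j} k) = fun s =>
      if j ∈ s then momentOfCumulant k (s.erase j) - momentOfCumulant k s
      else momentOfCumulant k s := by
  funext s
  split_ifs with hjs
  · rw [momentOfCumulant_eq_sum_mem _ hjs, momentOfCumulant_eq_sum_mem k hjs]
    have hterm : ∀ t ∈ s.powerset.filter (j ∈ ·),
        rhoTable {j} k t * momentOfCumulant (rhoTable {j} k) (s \ t) =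
          (if t = {j} then momentOfCumulant k (s \ t) else 0) -
            k t * momentOfCumulant k (s \ t) := by
      intro t ht
      have hjt := (mem_filter.1 ht).2
      rw [momentOfCumulant_congr fun u hu _ =>
          rhoTable_singleton_of_notMem k fun hju => (mem_sdiff.1 (hu hju)).2 hjt,
        rhoTable_singleton_of_mem k hjt]
      split_ifs <;> ring
    have hj : {j} ∈ s.powerset.filter (j ∈ ·) := by simpa using hjs
    rw [sum_congr rfl hterm, sum_sub_distrib, sum_ite_eq', if_pos hj, sdiff_singleton_eq_erase]
  · exact momentOfCumulant_congr fun t hts _ =>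
      rhoTable_singleton_of_notMem k fun hjt => hjs (hts hjt)

lemma momentOfCumulant_rhoTable {k p : Finset (Fin n) → ℝ} (h : momentOfCumulant k = moment p)
    (J : Finset (Fin n)) :
    momentOfCumulant (rhoTable J k) = moment (fun L => p (symmDiff L J)) := by
  induction J using Finset.induction_on with
  | empty =>
    rw [rhoTable_empty, h, ← bot_eq_empty]
    simp only [symmDiff_bot]
  | @insert j J hj ih =>
    have hflip : ∀ L, symmDiff L (insert j J) = symmDiff (symmDiff L {j}) J := fun L => by
      rw [symmDiff_assoc, insert_eq, (disjoint_singleton_left.2 hj).symmDiff_eq_sup]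
      rfl
    rw [rhoTable_insert k hj, momentOfCumulant_rhoTable_singleton, ih,
      ← moment_comp_symmDiff_singleton]
    simp only [hflip]

lemma eq_momentOfCumulant_rhoTable_compl {k p : Finset (Fin n) → ℝ}
    (h : momentOfCumulant k = moment p) (s : Finset (Fin n)) :
    p s = momentOfCumulant (rhoTable sᶜ k) univ := by
  rw [momentOfCumulant_rhoTable h, moment_univ, ← top_eq_univ, top_symmDiff, hnot_eq_compl,
    compl_compl]

end RhoTable

theorem cumulant_space_basic_semialgebraic_general {n : ℕ}
    (k : Finset (Fin n) → ℝ) :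
    (∃ p : Finset (Fin n) → ℝ,
      (∀ I : Finset (Fin n), 0 ≤ p I) ∧ (∑ I : Finset (Fin n), p I = 1) ∧
      (∀ I : Finset (Fin n), I.Nonempty → k I = cumulant (moment p) I)) ↔
    (∀ J : Finset (Fin n),
      0 ≤ ∑ π : Finpartition (univ : Finset (Fin n)),
            ∏ B ∈ π.parts, rhoTable J k B) := by
  constructor
  · rintro ⟨p, hp, hsum, hk⟩ J
    have h : momentOfCumulant k = moment p :=
      (momentOfCumulant_eq_iff (by rw [moment_empty, hsum])).2 hk
    have hJ := eq_momentOfCumulant_rhoTable_compl h Jᶜ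
    rw [compl_compl] at hJ
    exact (hJ ▸ hp Jᶜ : 0 ≤ momentOfCumulant (rhoTable J k) univ)
  · intro hJ
    obtain ⟨p, hp⟩ := moment_surjective (momentOfCumulant k)
    have hp_empty : moment p ∅ = 1 := by rw [hp, momentOfCumulant_empty]
    refine ⟨p, fun I => (eq_momentOfCumulant_rhoTable_compl hp.symm I).symm ▸ hJ Iᶜ, ?_,
      (momentOfCumulant_eq_iff hp_empty).1 hp.symm⟩
    rwa [← moment_empty]

/-- a table `k` (with `k_∅ = 0`) lies in the space of cumulants `𝒦_n`
— i.e. is the cumulant table of some probability distribution — if and only if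
`∑_{π ∈ Π([n])} ∏_{B ∈ π} k^{(J)}_B ≥ 0` for every `J ⊆ [n]`. Hence `𝒦_n` is a
basic semialgebraic set defined by these `2ⁿ` polynomial inequalities. -/
theorem cumulant_space_basic_semialgebraic {n : ℕ} (hn : 1 ≤ n)
    (k : Finset (Fin n) → ℝ) (hk0 : k ∅ = 0) :
    (∃ p : Finset (Fin n) → ℝ,
      (∀ I : Finset (Fin n), 0 ≤ p I) ∧ (∑ I : Finset (Fin n), p I = 1) ∧
      (∀ I : Finset (Fin n), I.Nonempty → k I = cumulant (moment p) I)) ↔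
    (∀ J : Finset (Fin n),
      0 ≤ ∑ π : Finpartition (univ : Finset (Fin n)),
            ∏ B ∈ π.parts, rhoTable J k B) :=
  cumulant_space_basic_semialgebraic_general k
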